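/- A canonical Φ-term t is a normal form (with respect to Φ-rewriting) if and only if its readback ⌈t⌉ is a normal form with respect to weak call-by-value reduction in the lambda calculus. -/
import Mathlib


/-- Pure untyped λ-terms with named variables. -/
inductive Tm : Type
  | var : ℕ → Tm
  | lam : ℕ → Tm → Tm
  | app : Tm → Tm → Tm
deriving DecidableEq

namespace Tm

/-- Free variables. -/
def fv : Tm → Finset ℕ
  | var x => {x}
  | lam x M => fv M \ {x}
  | app M N => fv M ∪ fv N

/-- A term is closed when it has no free variables. -/
def Closed (M : Tm) : Prop := fv M = ∅

/-- Values: variables and abstractions. -/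
def IsValue : Tm → Prop
  | var _ => True
  | lam _ _ => True
  | app _ _ => False

/-- (Naive) substitution `M{N/x}`. -/
def subst : Tm → ℕ → Tm → Tm
  | var y, x, N => if y = x then N else var y
  | lam y P, x, N => if y = x then lam y P else lam y (subst P x N)
  | app P Q, x, N => app (subst P x N) (subst Q x N)

/-- Weak call-by-value reduction: β-redexes whose argument is a value,
closed under both application contexts, never under λ. -/
inductive Cbv : Tm → Tm → Prop
  | beta {x M V} : IsValue V → Cbv (app (lam x M) V) (subst M x V)
  | appL {M N L} : Cbv M N → Cbv (app M L) (app N L)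
  | appR {M N L} : Cbv M N → Cbv (app L M) (app L N)

/-- The subterm relation on λ-terms. -/
inductive Sub : Tm → Tm → Prop
  | refl (M) : Sub M M
  | lam {M N x} : Sub M N → Sub M (lam x N)
  | appL {M N L} : Sub M N → Sub M (app N L)
  | appR {M N L} : Sub M L → Sub M (app N L)

end Tm

/-- `M N₁ … Nₖ` (left-nested application). -/
def appList : Tm → List Tm → Tm := List.foldl Tm.app

/-- `λx₁.…λxₖ.M`. -/
def lams : List ℕ → Tm → Tm := fun xs M => xs.foldr Tm.lam M

/-- `stepsN R n a b`: `a` reduces to `b` in exactly `n` `R`-steps. -/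
def stepsN {α : Type*} (R : α → α → Prop) : ℕ → α → α → Prop
  | 0, a, b => a = b
  | n + 1, a, b => ∃ c, R a c ∧ stepsN R n c b

/-- `a` is an `R`-normal form. -/
def NormalForm {α : Type*} (R : α → α → Prop) (a : α) : Prop := ¬ ∃ b, R a b

/-- Terms of the constructor rewrite system Φ: variables, the binary function
symbol `app`, and a constructor `c_{x,M}` for each variable `x` and λ-term `M`. -/
inductive PTm : Type
  | pvar : ℕ → PTm
  | papp : PTm → PTm → PTm
  | con : ℕ → Tm → List PTm → PTm

namespace PTm

/-- The (sorted) list of free variables of a λ-term. -/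
def fvList (M : Tm) : List ℕ := (Tm.fv M).sort (· ≤ ·)

/-- The translation `⌊·⌋` from λ-terms to Φ-terms. -/
def toP : Tm → PTm
  | .var x => pvar x
  | .lam x M => con x M ((fvList (Tm.lam x M)).map pvar)
  | .app M N => papp (toP M) (toP N)

/-- Simultaneous (sequential, for closed arguments) λ-substitution `M{Nᵢ/xᵢ}`. -/
def substList (M : Tm) (xs : List ℕ) (Ns : List Tm) : Tm :=
  (xs.zip Ns).foldl (fun acc p => Tm.subst acc p.1 p.2) M

/-- The readback `⌈·⌉` from Φ-terms to λ-terms. -/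
def toL : PTm → Tm
  | pvar x => .var x
  | papp u v => .app (toL u) (toL v)
  | con x M ts =>
      substList (Tm.lam x M) (fvList (Tm.lam x M)) (ts.attach.map fun t => toL t.1)
termination_by t => sizeOf t
decreasing_by all_goals first
  | (simp_wf; have := List.sizeOf_lt_of_mem t.2; omega)
  | (simp_wf; omega)
  | simp_wf

/-- First-order substitution on Φ-terms. -/
def psubst : PTm → ℕ → PTm → PTm
  | pvar y, x, N => if y = x then N else pvar y
  | papp u v, x, N => papp (psubst u x N) (psubst v x N)
  | con y M ts, x, N => con y M (ts.attach.map fun t => psubst t.1 x N)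
termination_by t _ _ => sizeOf t
decreasing_by all_goals first
  | (simp_wf; have := List.sizeOf_lt_of_mem t.2; omega)
  | (simp_wf; omega)
  | simp_wf

/-- Simultaneous (sequential, for ground arguments) substitution on Φ-terms. -/
def psubstList (t : PTm) (xs : List ℕ) (us : List PTm) : PTm :=
  (xs.zip us).foldl (fun acc p => psubst acc p.1 p.2) t

/-- Constructor terms of Φ: ground terms built from constructors only. -/
inductive IsConT : PTm → Prop
  | con {x M ts} : (∀ t ∈ ts, IsConT t) → IsConT (con x M ts)

/-- Well-formed Φ-terms: every constructor `c_{x,M}` gets exactly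
`|FV(λx.M)|` arguments. -/
inductive WF : PTm → Prop
  | pvar (x) : WF (pvar x)
  | papp {u v} : WF u → WF v → WF (papp u v)
  | con {x M ts} : ts.length = (fvList (Tm.lam x M)).length →
      (∀ t ∈ ts, WF t) → WF (con x M ts)

/-- Canonical closed Φ-terms: constructor terms, or `app` of canonical terms. -/
inductive Canonical : PTm → Prop
  | ofCon {t} : IsConT t → Canonical t
  | papp {u v} : Canonical u → Canonical v → Canonical (papp u v)

/-- Call-by-value rewriting in Φ: the rules are
`app(c_{x,M}(x₁,…,xₙ), x) → ⌊M⌋` (with `FV(λx.M) = x₁,…,xₙ`), matched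
variables are instantiated by constructor terms, and rewriting is closed
under arbitrary contexts. -/
inductive Step : PTm → PTm → Prop
  | beta {x : ℕ} {M : Tm} {ts : List PTm} {v : PTm} :
      (∀ t ∈ ts, IsConT t) → IsConT v →
      ts.length = (fvList (Tm.lam x M)).length →
      Step (papp (con x M ts) v)
        (psubstList (toP M) (fvList (Tm.lam x M) ++ [x]) (ts ++ [v]))
  | appL {u u' v} : Step u u' → Step (papp u v) (papp u' v)
  | appR {u v v'} : Step v v' → Step (papp u v) (papp u v')
  | conArg {x M t t' l r} : Step t t' →
      Step (con x M (l ++ t :: r)) (con x M (l ++ t' :: r))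

/-- Variables occurring in a Φ-term. -/
def pvarsOf : PTm → Finset ℕ
  | pvar x => {x}
  | papp u v => pvarsOf u ∪ pvarsOf v
  | con _ _ ts => ts.attach.foldr (fun t s => pvarsOf t.1 ∪ s) ∅
termination_by t => sizeOf t
decreasing_by all_goals first
  | (simp_wf; have := List.sizeOf_lt_of_mem t.2; omega)
  | (simp_wf; omega)
  | simp_wf

/-- The subterm relation on Φ-terms. -/
inductive PSub : PTm → PTm → Prop
  | refl (t) : PSub t t
  | appL {t u v} : PSub t u → PSub t (papp u v)
  | appR {t u v} : PSub t v → PSub t (papp u v)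
  | conArg {t u x M ts} : u ∈ ts → PSub t u → PSub t (con x M ts)

end PTm


namespace PTm

lemma conT_nf {t : PTm} (h : IsConT t) : NormalForm Step t := by
  induction h with
  | con hts ih =>
    rintro ⟨b, hb⟩
    cases hb with
    | conArg hstep =>
      rename_i x M t0 t0' l r
      exact ih t0 (by simp) ⟨_, hstep⟩

lemma foldl_subst_lam (ps : List (ℕ × Tm)) (y : ℕ) (P : Tm) :
    ∃ z Q, ps.foldl (fun acc p => Tm.subst acc p.1 p.2) (Tm.lam y P) = Tm.lam z Q := by
  induction ps generalizing y P with
  | nil => exact ⟨y, P, rfl⟩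
  | cons p ps ih =>
    simp only [List.foldl_cons, Tm.subst]
    split
    · exact ih y P
    · exact ih y _

lemma toL_con_lam (x : ℕ) (M : Tm) (ts : List PTm) :
    ∃ y P, toL (con x M ts) = Tm.lam y P := by
  rw [toL, substList]
  exact foldl_subst_lam _ _ _

lemma lam_cbv_nf (y : ℕ) (P : Tm) : NormalForm Tm.Cbv (Tm.lam y P) := by
  rintro ⟨b, hb⟩
  cases hb

lemma toL_papp (u v : PTm) : toL (papp u v) = Tm.app (toL u) (toL v) := by
  rw [toL]

end PTm

/-- a canonical Φ-term is a Φ-normal form iff its readback `⌈t⌉`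
is a weak CBV normal form. -/
theorem canonical_nf_iff (t : PTm) (hwf : PTm.WF t) (hc : PTm.Canonical t) :
    NormalForm PTm.Step t ↔ NormalForm Tm.Cbv (PTm.toL t) := by
  induction hc with
  | ofCon h =>
    cases h with
    | con hts =>
      rename_i x M ts
      obtain ⟨y, P, hyP⟩ := PTm.toL_con_lam x M ts
      rw [hyP]
      exact iff_of_true (PTm.conT_nf (PTm.IsConT.con hts)) (PTm.lam_cbv_nf y P)
  | papp hu hv ihu ihv =>
    rename_i u v
    cases hwf with
    | papp hwu hwv =>
      rw [PTm.toL_papp]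
      constructor
      · intro hnf
        have hunf : NormalForm PTm.Step u := fun ⟨b, hb⟩ => hnf ⟨_, PTm.Step.appL hb⟩
        have hvnf : NormalForm PTm.Step v := fun ⟨b, hb⟩ => hnf ⟨_, PTm.Step.appR hb⟩
        rintro ⟨b, hb⟩
        generalize hU : PTm.toL u = U at hb
        generalize hV : PTm.toL v = V at hb
        cases hb with
        | beta hval =>
          rename_i x M
          have huc : PTm.IsConT u := by
            cases hu with
            | ofCon h => exact h
            | papp h1 h2 => rw [PTm.toL_papp] at hU; cases hU
          have hvc : PTm.IsConT v := by
            cases hv with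
            | ofCon h => exact h
            | papp h1 h2 =>
              rw [PTm.toL_papp] at hV
              rw [← hV] at hval
              exact absurd hval (by simp [Tm.IsValue])
          cases huc with
          | con hts =>
            rename_i x0 M0 ts0
            cases hwu with
            | con hlen _ =>
              exact hnf ⟨_, PTm.Step.beta hts hvc hlen⟩
        | appL h => exact (ihu hwu).mp hunf ⟨_, hU ▸ h⟩
        | appR h => exact (ihv hwv).mp hvnf ⟨_, hV ▸ h⟩
      · intro hnf
        have hunf : NormalForm Tm.Cbv (PTm.toL u) :=
          fun ⟨b, hb⟩ => hnf ⟨_, Tm.Cbv.appL hb⟩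
        have hvnf : NormalForm Tm.Cbv (PTm.toL v) :=
          fun ⟨b, hb⟩ => hnf ⟨_, Tm.Cbv.appR hb⟩
        rintro ⟨b, hb⟩
        cases hb with
        | beta hts hvct hlen =>
          rename_i x M ts
          obtain ⟨y, P, hyP⟩ := PTm.toL_con_lam x M ts
          have hvval : Tm.IsValue (PTm.toL v) := by
            cases hvct with
            | con h =>
              rename_i x1 M1 ts1
              obtain ⟨y1, P1, h1⟩ := PTm.toL_con_lam x1 M1 ts1
              rw [h1]; trivial
          exact hnf ⟨_, hyP ▸ Tm.Cbv.beta hvval⟩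
        | appL h => exact (ihu hwu).mpr hunf ⟨_, h⟩
        | appR h => exact (ihv hwv).mpr hvnf ⟨_, h⟩
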